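/- Let γ be a real number. Define, for real x and t, c(x,t) = (1 − e^{−γt}·cos x)/2, p(x,t) = e^{−t}(cos x − 1), u(x,t) = e^{−t}·sin x, q(x,t) = e^{−t}, and c̃(x,t) = (e^{−γt}(sin²x − cos x) + 1)/2. Then for all real x and t: (i) u(x,t) = −∂p/∂x(x,t); (ii) ∂p/∂t(x,t) + ∂u/∂x(x,t) = q(x,t); (iii) ∂c/∂t(x,t) + u(x,t)·∂c/∂x(x,t) − γ·∂²c/∂x²(x,t) = (c̃(x,t) − c(x,t))·q(x,t). Moreover u(0,t) = u(2π,t) = 0 and ∂c/∂x(0,t) = ∂c/∂x(2π,t) = 0 for all t; c(x,0) = (1 − cos x)/2 and p(x,0) = cos x − 1; and if γ ≥ 0 then 0 ≤ c(x,t) ≤ 1 for all x and all t ≥ 0. -/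

import Mathlib

noncomputable section

namespace ExactSolution1D

/-- Concentration `c(x,t) = (1 - e^{-γt}·cos x)/2`. -/
def c (γ x t : ℝ) : ℝ := (1 - Real.exp (-(γ * t)) * Real.cos x) / 2

/-- Pressure `p(x,t) = e^{-t}(cos x - 1)`. -/
def p (x t : ℝ) : ℝ := Real.exp (-t) * (Real.cos x - 1)

/-- Darcy velocity `u(x,t) = e^{-t}·sin x`. -/
def u (x t : ℝ) : ℝ := Real.exp (-t) * Real.sin x

/-- External volumetric flow rate `q(x,t) = e^{-t}`. -/
def q (x t : ℝ) : ℝ := Real.exp (-t)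

/-- Injected concentration `c̃(x,t) = (e^{-γt}(sin²x - cos x) + 1)/2`. -/
def ctld (γ x t : ℝ) : ℝ :=
  (Real.exp (-(γ * t)) * (Real.sin x ^ 2 - Real.cos x) + 1) / 2

open Real

lemma half_one_sub_mul_mem_Icc {a b : ℝ} (ha : |a| ≤ 1) (hb : |b| ≤ 1) :
    0 ≤ (1 - a * b) / 2 ∧ (1 - a * b) / 2 ≤ 1 := by
  have hab : |a * b| ≤ 1 := by
    rw [abs_mul]; exact mul_le_one₀ ha (abs_nonneg b) hb
  obtain ⟨hlo, hhi⟩ := abs_le.mp hab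
  constructor <;> linarith

lemma hasDerivAt_exp_neg_mul (k t : ℝ) :
    HasDerivAt (fun s => exp (-(k * s))) (-k * exp (-(k * t))) t := by
  simpa [mul_comm] using ((hasDerivAt_id t).const_mul k).neg.exp

lemma hasDerivAt_p_x (x t : ℝ) : HasDerivAt (fun x' => p x' t) (-u x t) x := by
  simpa [p, u] using ((hasDerivAt_cos x).sub_const 1).const_mul (exp (-t))

lemma hasDerivAt_p_t (x t : ℝ) :
    HasDerivAt (fun t' => p x t') (-exp (-t) * (cos x - 1)) t := by
  simpa [p] using (hasDerivAt_neg' t).exp.mul_const (cos x - 1)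

lemma hasDerivAt_u_x (x t : ℝ) : HasDerivAt (fun x' => u x' t) (exp (-t) * cos x) x :=
  (hasDerivAt_sin x).const_mul (exp (-t))

lemma deriv_c_x (γ t : ℝ) :
    deriv (fun x' => c γ x' t) = fun x => exp (-(γ * t)) * sin x / 2 := by
  funext x
  refine HasDerivAt.deriv ?_
  simpa [c] using (((hasDerivAt_cos x).const_mul (exp (-(γ * t)))).const_sub 1).div_const 2

lemma deriv_deriv_c_x (γ x t : ℝ) :
    deriv (deriv (fun x' => c γ x' t)) x = exp (-(γ * t)) * cos x / 2 := by
  rw [deriv_c_x]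
  exact (((hasDerivAt_sin x).const_mul (exp (-(γ * t)))).div_const 2).deriv

lemma hasDerivAt_c_t (γ x t : ℝ) :
    HasDerivAt (fun t' => c γ x t') (γ * exp (-(γ * t)) * cos x / 2) t := by
  simpa [c] using (((hasDerivAt_exp_neg_mul γ t).mul_const (cos x)).const_sub 1).div_const 2

/-- Example 4.1: the constructed analytical solution of the 1D compressible miscible
displacement system with `φ = κ = μ = 1`, `z₁ = z₂ = 1` and `D = γ`. -/
theorem exact_solution_1d (γ : ℝ) :
    -- (i) Darcy's law: u = -p_x
    (∀ x t : ℝ, u x t = -(deriv (fun x' => p x' t) x)) ∧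
    -- (ii) pressure equation: p_t + u_x = q
    (∀ x t : ℝ, deriv (fun t' => p x t') t + deriv (fun x' => u x' t) x = q x t) ∧
    -- (iii) concentration equation: c_t + u·c_x - γ·c_xx = (c̃ - c)·q
    (∀ x t : ℝ,
      deriv (fun t' => c γ x t') t + u x t * deriv (fun x' => c γ x' t) x
        - γ * deriv (deriv (fun x' => c γ x' t)) x
        = (ctld γ x t - c γ x t) * q x t) ∧
    -- boundary conditions: u = 0 and c_x = 0 at x = 0 and x = 2π
    (∀ t : ℝ, u 0 t = 0 ∧ u (2 * Real.pi) t = 0) ∧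
    (∀ t : ℝ, deriv (fun x' => c γ x' t) 0 = 0 ∧
      deriv (fun x' => c γ x' t) (2 * Real.pi) = 0) ∧
    -- initial conditions
    (∀ x : ℝ, c γ x 0 = (1 - Real.cos x) / 2) ∧
    (∀ x : ℝ, p x 0 = Real.cos x - 1) ∧
    -- bounds: 0 ≤ c ≤ 1 for t ≥ 0 when γ ≥ 0
    (0 ≤ γ → ∀ x t : ℝ, 0 ≤ t → 0 ≤ c γ x t ∧ c γ x t ≤ 1) := by
  refine ⟨fun x t => ?darcy, fun x t => ?pressure, fun x t => ?concentration,
    fun t => ?u_boundary, fun t => ?c_boundary, fun x => ?c_initial, fun x => ?p_initial,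
    fun hγ x t ht => ?bounds⟩
  case darcy => rw [(hasDerivAt_p_x x t).deriv, neg_neg]
  case pressure =>
    rw [(hasDerivAt_p_t x t).deriv, (hasDerivAt_u_x x t).deriv, q]; ring
  case concentration =>
    rw [deriv_deriv_c_x, (hasDerivAt_c_t γ x t).deriv, deriv_c_x, u, q, c, ctld]; ring
  case u_boundary => simp [u, sin_two_pi]
  case c_boundary => simp [deriv_c_x, sin_two_pi]
  case c_initial => simp [c]
  case p_initial => simp [p]
  case bounds =>
    have hexp : |exp (-(γ * t))| ≤ 1 := by
      rw [abs_of_pos (exp_pos _), exp_le_one_iff, neg_nonpos]; exact mul_nonneg hγ ht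
    exact half_one_sub_mul_mem_Icc hexp (abs_cos_le_one x)

end ExactSolution1D
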